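/- (Theorem 1) Let N_x, N_y be positive integers and let r ∈ ℂ^{N_x N_y} admit at least one atomic decomposition r = Σ_{k=1}^K p_k b(α_k,β_k) with all p_k > 0. Then the atomic norm ‖r‖_A equals the optimal value V(r) of the semidefinite program: minimize (t + tr T)/(2√(N_x N_y)) over t ∈ ℝ and two-level Toeplitz matrices T subject to the block matrix [[t, rᴴ],[r, T]] being Hermitian positive semidefinite. -/

import Mathlib

open Matrix ComplexOrder ENNReal

/-- The 2-D DOA atom `b(α,β) ∈ ℂ^{N_x N_y}`, indexed by pairs `(m,n)`, with entries
`[b(α,β)]_{(m,n)} = exp(−iπ m cos α) · exp(iπ n cos β)`. -/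
noncomputable def atom (Nx Ny : ℕ) (α β : ℝ) : Fin Nx × Fin Ny → ℂ := fun i =>
  Complex.exp (-((Real.pi * ((i.1 : ℕ) : ℝ) * Real.cos α : ℝ) : ℂ) * Complex.I) *
  Complex.exp (((Real.pi * ((i.2 : ℕ) : ℝ) * Real.cos β : ℝ) : ℂ) * Complex.I)

/-- A matrix indexed by pairs is two-level Toeplitz if its entries depend on the
indices only through the differences `(m − m', n − n')`. -/
def IsTwoLevelToeplitz {Nx Ny : ℕ}
    (T : Matrix (Fin Nx × Fin Ny) (Fin Nx × Fin Ny) ℂ) : Prop :=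
  ∀ i j i' j' : Fin Nx × Fin Ny,
    ((i.1 : ℤ) - (j.1 : ℤ) = (i'.1 : ℤ) - (j'.1 : ℤ)) →
    ((i.2 : ℤ) - (j.2 : ℤ) = (i'.2 : ℤ) - (j'.2 : ℤ)) →
    T i j = T i' j'

/-- The `(1+N)×(1+N)` block matrix `[[t, rᴴ],[r, T]]`. -/
def blockMat {Nx Ny : ℕ} (t : ℝ) (r : Fin Nx × Fin Ny → ℂ)
    (T : Matrix (Fin Nx × Fin Ny) (Fin Nx × Fin Ny) ℂ) :
    Matrix (Unit ⊕ (Fin Nx × Fin Ny)) (Unit ⊕ (Fin Nx × Fin Ny)) ℂ :=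
  Matrix.fromBlocks (Matrix.of fun _ _ => (t : ℂ)) (Matrix.of fun _ j => star (r j))
    (Matrix.of fun i _ => r i) T

/-- The atomic norm `‖r‖_A = inf {∑ₖ pₖ : pₖ > 0, r = ∑ₖ pₖ b(αₖ,βₖ)}`, valued in
`ℝ≥0∞` (infimum over the empty set being `+∞`). -/
noncomputable def atomicNorm (Nx Ny : ℕ) (r : Fin Nx × Fin Ny → ℂ) : ℝ≥0∞ :=
  ⨅ (K : ℕ) (p : Fin K → ℝ) (α : Fin K → ℝ) (β : Fin K → ℝ)
    (_ : ∀ k, 0 < p k) (_ : r = ∑ k, (p k : ℂ) • atom Nx Ny (α k) (β k)),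
    ENNReal.ofReal (∑ k, p k)

/-- The SDP value
`V(r) = inf {(t + tr T)/(2√(N_x N_y)) : T two-level Toeplitz, [[t, rᴴ],[r, T]] ⪰ 0}`. -/
noncomputable def sdpValue (Nx Ny : ℕ) (r : Fin Nx × Fin Ny → ℂ) : ℝ≥0∞ :=
  ⨅ (t : ℝ) (T : Matrix (Fin Nx × Fin Ny) (Fin Nx × Fin Ny) ℂ)
    (_ : IsTwoLevelToeplitz T) (_ : (blockMat t r T).PosSemidef),
    ENNReal.ofReal ((t + (Matrix.trace T).re) / (2 * Real.sqrt (Nx * Ny)))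

lemma atom_eq_exp (Nx Ny : ℕ) (α β : ℝ) (i : Fin Nx × Fin Ny) :
    atom Nx Ny α β i =
      Complex.exp (((Real.pi * ((i.2 : ℕ) : ℝ) * Real.cos β
        - Real.pi * ((i.1 : ℕ) : ℝ) * Real.cos α : ℝ) : ℂ) * Complex.I) := by
  unfold atom
  rw [← Complex.exp_add]
  congr 1
  push_cast
  ring

lemma star_atom (Nx Ny : ℕ) (α β : ℝ) (i : Fin Nx × Fin Ny) :
    star (atom Nx Ny α β i) =
      Complex.exp (((Real.pi * ((i.1 : ℕ) : ℝ) * Real.cos α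
        - Real.pi * ((i.2 : ℕ) : ℝ) * Real.cos β : ℝ) : ℂ) * Complex.I) := by
  rw [atom_eq_exp, Complex.star_def, ← Complex.exp_conj, _root_.map_mul, Complex.conj_I,
    Complex.conj_ofReal]
  rw [show ((Real.pi * ((i.2 : ℕ) : ℝ) * Real.cos β
        - Real.pi * ((i.1 : ℕ) : ℝ) * Real.cos α : ℝ) : ℂ) * (-Complex.I)
      = ((Real.pi * ((i.1 : ℕ) : ℝ) * Real.cos α
        - Real.pi * ((i.2 : ℕ) : ℝ) * Real.cos β : ℝ) : ℂ) * Complex.I by push_cast; ring]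

lemma atom_mul_star (Nx Ny : ℕ) (α β : ℝ) (i j : Fin Nx × Fin Ny) :
    atom Nx Ny α β i * star (atom Nx Ny α β j) =
      Complex.exp (((Real.pi * Real.cos β * (((i.2 : ℕ) : ℝ) - ((j.2 : ℕ) : ℝ))
        - Real.pi * Real.cos α * (((i.1 : ℕ) : ℝ) - ((j.1 : ℕ) : ℝ)) : ℝ) : ℂ) * Complex.I) := by
  rw [atom_eq_exp, star_atom, ← Complex.exp_add]
  congr 1
  push_cast
  ring

lemma atom_mul_star_self (Nx Ny : ℕ) (α β : ℝ) (i : Fin Nx × Fin Ny) :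
    atom Nx Ny α β i * star (atom Nx Ny α β i) = 1 := by
  rw [atom_mul_star]
  simp

lemma sdp_lower_aux (Nx Ny : ℕ) (hNx : 0 < Nx) (hNy : 0 < Ny)
    (r : Fin Nx × Fin Ny → ℂ) (S : ℝ)
    (i₀ : Fin Nx × Fin Ny) (hr0 : r i₀ = (S : ℂ))
    (t : ℝ) (T : Matrix (Fin Nx × Fin Ny) (Fin Nx × Fin Ny) ℂ)
    (hT : IsTwoLevelToeplitz T) (hPSD : (blockMat t r T).PosSemidef) :
    S ≤ (t + (Matrix.trace T).re) / (2 * Real.sqrt (Nx * Ny)) := by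
  classical
  have hN : (0:ℝ) < (Nx : ℝ) * Ny := by positivity
  set s : ℝ := Real.sqrt ((Nx : ℝ) * Ny) with hs_def
  have hs : 0 < s := Real.sqrt_pos.2 hN
  have hss : s * s = (Nx : ℝ) * Ny := Real.mul_self_sqrt hN.le
  -- trace = N * T i₀ i₀
  have htr : (Matrix.trace T).re = ((Nx : ℝ) * Ny) * (T i₀ i₀).re := by
    have : Matrix.trace T = (Nx * Ny : ℕ) * T i₀ i₀ := by
      unfold Matrix.trace
      have : ∀ i : Fin Nx × Fin Ny, Matrix.diag T i = T i₀ i₀ := fun i =>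
        hT i i i₀ i₀ (by ring) (by ring)
      rw [Finset.sum_congr rfl fun i _ => this i]
      simp [Finset.card_univ, mul_comm]
    rw [this]
    push_cast
    simp
  -- test vector
  set x : Unit ⊕ (Fin Nx × Fin Ny) → ℂ :=
    Sum.elim (fun _ => (1:ℂ)) (fun i => if i = i₀ then -(s:ℂ) else 0) with hx
  have hq := hPSD.dotProduct_mulVec_nonneg x
  have hE : star x ⬝ᵥ (blockMat t r T) *ᵥ x
      = (t : ℂ) - s * star (r i₀) - s * r i₀ + (s * s : ℝ) * T i₀ i₀ := by
    have hmv : ∀ u, ((blockMat t r T) *ᵥ x) u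
        = blockMat t r T u (Sum.inl ()) + blockMat t r T u (Sum.inr i₀) * (-(s:ℂ)) := by
      intro u
      unfold Matrix.mulVec dotProduct
      rw [Fintype.sum_sum_type]
      simp only [hx, Sum.elim_inl, Sum.elim_inr, mul_one, mul_ite, mul_zero]
      rw [Finset.sum_ite_eq']
      simp
    unfold dotProduct
    rw [Fintype.sum_sum_type]
    simp only [hmv]
    simp only [hmv, hx, Pi.star_apply, Sum.elim_inl, Sum.elim_inr, star_one, one_mul]
    rw [show ∀ f : Fin Nx × Fin Ny → ℂ, (∑ i, star (if i = i₀ then -(s:ℂ) else 0) * f i)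
        = ∑ i, (if i = i₀ then star (-(s:ℂ)) * f i else 0) from fun f => by
      refine Finset.sum_congr rfl fun i _ => ?_
      split <;> simp]
    rw [Finset.sum_ite_eq']
    simp only [Finset.mem_univ, if_true]
    simp only [blockMat, Matrix.fromBlocks_apply₁₁, Matrix.fromBlocks_apply₁₂,
      Matrix.fromBlocks_apply₂₁, Matrix.fromBlocks_apply₂₂, Matrix.of_apply]
    push_cast
    ring_nf
    simp [Complex.star_def, Complex.conj_ofReal]
    ring
  have hre : (0:ℝ) ≤ t - 2 * s * S + (s * s) * (T i₀ i₀).re := by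
    have h0 := (Complex.le_def.1 hq).1
    rw [hE, hr0] at h0
    simpa using
      le_trans h0 (le_of_eq (by simp [Complex.add_re, Complex.sub_re, Complex.mul_re,
        Complex.ofReal_re, Complex.ofReal_im, Complex.conj_ofReal]; ring))
  rw [le_div_iff₀ (by positivity)]
  rw [htr]
  rw [hss] at hre
  linarith

lemma sdp_witness_aux (Nx Ny : ℕ) (hNx : 0 < Nx) (hNy : 0 < Ny)
    (r : Fin Nx × Fin Ny → ℂ)
    (K : ℕ) (p : Fin K → ℝ) (hp : ∀ k, 0 < p k) (α β : Fin K → ℝ)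
    (hr : r = ∑ k, (p k : ℂ) • atom Nx Ny (α k) (β k)) :
    ∃ (t : ℝ) (T : Matrix (Fin Nx × Fin Ny) (Fin Nx × Fin Ny) ℂ),
      IsTwoLevelToeplitz T ∧ (blockMat t r T).PosSemidef ∧
      (t + (Matrix.trace T).re) / (2 * Real.sqrt (Nx * Ny)) = ∑ k, p k := by
  classical
  have hN : (0:ℝ) < (Nx : ℝ) * Ny := by positivity
  set s : ℝ := Real.sqrt ((Nx : ℝ) * Ny) with hs_def
  have hs : 0 < s := Real.sqrt_pos.2 hN
  have hss : s * s = (Nx : ℝ) * Ny := Real.mul_self_sqrt hN.le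
  set c : ℝ := Real.sqrt s with hc_def
  have hc : 0 < c := Real.sqrt_pos.2 hs
  have hcc : c * c = s := Real.mul_self_sqrt hs.le
  set T₀ : Matrix (Fin Nx × Fin Ny) (Fin Nx × Fin Ny) ℂ :=
    Matrix.of fun i j => ((s⁻¹ : ℝ) : ℂ) *
      ∑ k, (p k : ℂ) * (atom Nx Ny (α k) (β k) i * star (atom Nx Ny (α k) (β k) j)) with hT₀
  refine ⟨s * ∑ k, p k, T₀, ?_, ?_, ?_⟩
  · -- Toeplitz
    intro i j i' j' h1 h2
    simp only [hT₀, Matrix.of_apply]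
    congr 1
    refine Finset.sum_congr rfl fun k _ => ?_
    congr 1
    rw [atom_mul_star, atom_mul_star]
    have e1 : ((i.1 : ℕ) : ℝ) - ((j.1 : ℕ) : ℝ) = ((i'.1 : ℕ) : ℝ) - ((j'.1 : ℕ) : ℝ) := by
      have := congrArg (Int.cast : ℤ → ℝ) h1
      push_cast at this ⊢
      convert this using 2 <;> norm_cast
    have e2 : ((i.2 : ℕ) : ℝ) - ((j.2 : ℕ) : ℝ) = ((i'.2 : ℕ) : ℝ) - ((j'.2 : ℕ) : ℝ) := by
      have := congrArg (Int.cast : ℤ → ℝ) h2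
      push_cast at this ⊢
      convert this using 2 <;> norm_cast
    rw [e1, e2]
  · -- PSD
    have hstarR : ∀ x : ℝ, star ((x : ℝ) : ℂ) = ((x : ℝ) : ℂ) := fun x => by
      rw [Complex.star_def, Complex.conj_ofReal]
    have hcC : ((c : ℝ) : ℂ) ≠ 0 := by exact_mod_cast hc.ne'
    have hrj : ∀ j, r j = ∑ k, (p k : ℂ) * atom Nx Ny (α k) (β k) j := by
      intro j; rw [hr]; simp [Finset.sum_apply]
    set v : Fin K → (Unit ⊕ (Fin Nx × Fin Ny)) → ℂ := fun k =>
      Sum.elim (fun _ => (c : ℂ)) (fun i => ((c : ℂ))⁻¹ * atom Nx Ny (α k) (β k) i) with hv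
    set A : Matrix (Fin K) (Unit ⊕ (Fin Nx × Fin Ny)) ℂ :=
      Matrix.of fun k u => ((Real.sqrt (p k) : ℝ) : ℂ) * star (v k u) with hA
    have key : blockMat (s * ∑ k, p k) r T₀ = Aᴴ * A := by
      have hAA : ∀ u u', (Aᴴ * A) u u' = ∑ k, (p k : ℂ) * (v k u * star (v k u')) := by
        intro u u'
        rw [Matrix.mul_apply]
        refine Finset.sum_congr rfl fun k _ => ?_
        simp only [Matrix.conjTranspose_apply, hA, Matrix.of_apply, star_mul', star_star,
          hstarR]
        have hpk : ((p k : ℝ) : ℂ) = ((Real.sqrt (p k) : ℝ) : ℂ) * ((Real.sqrt (p k) : ℝ) : ℂ) := by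
          norm_cast
          exact (Real.mul_self_sqrt (hp k).le).symm
        rw [hpk]
        ring
      ext u u'
      rw [hAA]
      cases u with
      | inl u =>
        cases u' with
        | inl u' =>
          simp only [blockMat, Matrix.fromBlocks_apply₁₁, Matrix.of_apply, hv, Sum.elim_inl,
            hstarR]
          have : ((c : ℝ) : ℂ) * ((c : ℝ) : ℂ) = ((s : ℝ) : ℂ) := by
            norm_cast
          rw [show (∑ k, (p k : ℂ) * (((c:ℝ):ℂ) * ((c:ℝ):ℂ))) = ∑ k, (p k : ℂ) * ((s:ℝ):ℂ) from
            Finset.sum_congr rfl fun k _ => by rw [this]]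
          push_cast
          rw [Finset.mul_sum]
          exact Finset.sum_congr rfl fun k _ => mul_comm _ _
        | inr j =>
          simp only [blockMat, Matrix.fromBlocks_apply₁₂, Matrix.of_apply, hv, Sum.elim_inl,
            Sum.elim_inr]
          rw [hrj j, star_sum]
          refine Finset.sum_congr rfl fun k _ => ?_
          rw [star_mul', hstarR]
          rw [star_mul']
          rw [show star (((c:ℝ):ℂ))⁻¹ = (((c:ℝ):ℂ))⁻¹ by rw [star_inv₀, hstarR]]
          field_simp
      | inr i =>
        cases u' with
        | inl u' =>
          simp only [blockMat, Matrix.fromBlocks_apply₂₁, Matrix.of_apply, hv, Sum.elim_inl,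
            Sum.elim_inr, hstarR]
          rw [hrj i]
          refine Finset.sum_congr rfl fun k _ => ?_
          field_simp
        | inr j =>
          simp only [blockMat, Matrix.fromBlocks_apply₂₂, hT₀, Matrix.of_apply, hv,
            Sum.elim_inr]
          rw [Finset.mul_sum]
          refine Finset.sum_congr rfl fun k _ => ?_
          rw [star_mul']
          rw [show star (((c:ℝ):ℂ))⁻¹ = (((c:ℝ):ℂ))⁻¹ by rw [star_inv₀, hstarR]]
          have : ((s⁻¹ : ℝ) : ℂ) = (((c:ℝ):ℂ))⁻¹ * (((c:ℝ):ℂ))⁻¹ := by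
            rw [← mul_inv]
            norm_cast
            rw [hcc]
          rw [this]
          ring
    rw [key]
    exact Matrix.posSemidef_conjTranspose_mul_self A
  · -- objective
    have htr : Matrix.trace T₀ = ((((Nx : ℝ) * Ny) * s⁻¹ * ∑ k, p k : ℝ) : ℂ) := by
      unfold Matrix.trace
      have hdiag : ∀ i : Fin Nx × Fin Ny, Matrix.diag T₀ i = ((s⁻¹ * ∑ k, p k : ℝ) : ℂ) := by
        intro i
        simp only [Matrix.diag_apply, hT₀, Matrix.of_apply, atom_mul_star_self, mul_one]
        push_cast
        ring
      rw [Finset.sum_congr rfl fun i _ => hdiag i]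
      simp [Finset.card_univ]
      push_cast
      ring
    rw [htr]
    rw [Complex.ofReal_re]
    have h1 : ((Nx : ℝ) * Ny) * s⁻¹ = s := by
      rw [← hss]; field_simp
    rw [h1]
    rw [div_eq_iff (by positivity : (2:ℝ) * s ≠ 0)]
    ring

/-- Theorem 1 of the paper: if `r ∈ ℂ^{N_x N_y}` admits at least
one atomic decomposition `r = ∑ₖ pₖ b(αₖ,βₖ)` with all `pₖ > 0`, then the atomic norm
`‖r‖_A` equals the optimal value `V(r)` of the SDP: minimize `(t + tr T)/(2√(N_x N_y))`
over `t ∈ ℝ` and two-level Toeplitz `T` subject to `[[t, rᴴ],[r, T]] ⪰ 0`. -/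
theorem stmt11 (Nx Ny : ℕ) (hNx : 0 < Nx) (hNy : 0 < Ny)
    (r : Fin Nx × Fin Ny → ℂ)
    (K : ℕ) (p : Fin K → ℝ) (hp : ∀ k, 0 < p k) (α β : Fin K → ℝ)
    (hr : r = ∑ k, (p k : ℂ) • atom Nx Ny (α k) (β k)) :
    atomicNorm Nx Ny r = sdpValue Nx Ny r := by
  classical
  set i₀ : Fin Nx × Fin Ny := (⟨0, hNx⟩, ⟨0, hNy⟩) with hi₀
  have hatom00 : ∀ a b : ℝ, atom Nx Ny a b i₀ = 1 := by
    intro a b; unfold atom; norm_num [hi₀]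
  have hval : ∀ (K' : ℕ) (p' α' β' : Fin K' → ℝ),
      r = (∑ k, (p' k : ℂ) • atom Nx Ny (α' k) (β' k)) → r i₀ = ((∑ k, p' k : ℝ) : ℂ) := by
    intro K' p' α' β' h
    have := congrFun h i₀
    rw [Finset.sum_apply] at this
    simp only [Pi.smul_apply, smul_eq_mul, hatom00, mul_one] at this
    rw [this]
    push_cast
    rfl
  have hr0 := hval K p α β hr
  have hAtomic : atomicNorm Nx Ny r = ENNReal.ofReal (∑ k, p k) := by
    apply le_antisymm
    · exact iInf_le_of_le K <| iInf_le_of_le p <| iInf_le_of_le α <| iInf_le_of_le β <|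
        iInf_le_of_le hp <| iInf_le_of_le hr le_rfl
    · refine le_iInf fun K' => le_iInf fun p' => le_iInf fun α' => le_iInf fun β' =>
        le_iInf fun hp' => le_iInf fun hr' => ?_
      have h2 := hval K' p' α' β' hr'
      have : (∑ k, p k) = ∑ k, p' k := by
        have := hr0.symm.trans h2
        exact_mod_cast this
      rw [this]
  have hSDP : sdpValue Nx Ny r = ENNReal.ofReal (∑ k, p k) := by
    apply le_antisymm
    · obtain ⟨t, T, hToep, hPSD, heq⟩ := sdp_witness_aux Nx Ny hNx hNy r K p hp α β hr
      exact iInf_le_of_le t <| iInf_le_of_le T <| iInf_le_of_le hToep <|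
        iInf_le_of_le hPSD (le_of_eq (congrArg ENNReal.ofReal heq))
    · refine le_iInf fun t => le_iInf fun T => le_iInf fun hToep => le_iInf fun hPSD => ?_
      exact ENNReal.ofReal_le_ofReal
        (sdp_lower_aux Nx Ny hNx hNy r (∑ k, p k) i₀ hr0 t T hToep hPSD)
  rw [hAtomic, hSDP]
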